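/- In the I-GMANOVA setup with partition sizes (t, r, q), q = N − t − r, let R̂₀ = K⁻¹(S_c + S_c^{1/2} P_{A₀}^⊥ Z_{W1} P_{C†} Z_{W1}† P_{A₀}^⊥ S_c^{1/2}), which is Hermitian positive definite, let V_{c,1} = [I_M; 0_{(K−M)×M}] ∈ ℂ^{K×M}, Z_c = Z V_{c,1} with row blocks Z₁ ∈ ℂ^{t×M}, Z₂ ∈ ℂ^{r×M}, Z₃ ∈ ℂ^{q×M}, Z₂₃ = [Z₂; Z₃], and let S₂ ∈ ℂ^{(r+q)×(r+q)} be the lower-right (r+q)×(r+q) block of S_c. With Z_{W0} = R̂₀^{-1/2}Z and Ā₀ = R̂₀^{-1/2}E_t, one has (Z_{W0} V_{c,1})† P_{Ā₀}^⊥ (Z_{W0} V_{c,1}) = K · ( X − X (I_M + X)⁻¹ X ), where X = Z₂₃† S₂⁻¹ Z₂₃. -/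

import Mathlib

open Matrix
open scoped ComplexOrder

noncomputable section

/-- Orthogonal projector onto the column space of `F`: `P_F = F (Fᴴ F)⁻¹ Fᴴ`. -/
def proj {n m : Type*} [Fintype n] [Fintype m] [DecidableEq n] [DecidableEq m]
    (F : Matrix n m ℂ) : Matrix n n ℂ :=
  F * (Fᴴ * F)⁻¹ * Fᴴ

/-- Complementary projector `P_F^⊥ = I - P_F`. -/
def projPerp {n m : Type*} [Fintype n] [Fintype m] [DecidableEq n] [DecidableEq m]
    (F : Matrix n m ℂ) : Matrix n n ℂ :=
  1 - proj F

/-- The square root of a positive semidefinite matrix, as defined in the older Mathlib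
(removed since then). -/
def Matrix.PosSemidef.sqrt {n 𝕜 : Type*} [Fintype n] [RCLike 𝕜] [DecidableEq n]
    {A : Matrix n n 𝕜} (hA : A.PosSemidef) : Matrix n n 𝕜 :=
  (hA.1.eigenvectorUnitary : Matrix n n 𝕜) * diagonal ((↑) ∘ (√·) ∘ hA.1.eigenvalues) *
    (star (hA.1.eigenvectorUnitary : Matrix n n 𝕜))

/-!
Write `R̂₀ = V * V` with `V = R̂₀^{1/2}`. Whitening turns the left-hand side into
`Z_cᴴ (R̂₀⁻¹ - R̂₀⁻¹ E_t (E_tᴴ R̂₀⁻¹ E_t)⁻¹ E_tᴴ R̂₀⁻¹) Z_c`, and the middle factor equals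
`E₂ (E₂ᴴ R̂₀ E₂)⁻¹ E₂ᴴ`, where `E₂` selects the last `r + q` coordinates (a Schur complement
identity). The matrix `S_c^{1/2} P_{A₀}^⊥ S_c^{-1/2} = I - E_t (E_tᴴ S_c⁻¹ E_t)⁻¹ E_tᴴ S_c⁻¹`
leaves those coordinates untouched, so `E₂ᴴ R̂₀ E₂ = K⁻¹ (S₂ + Z₂₃ Z₂₃ᴴ)`, and the Woodbury
identity finishes the computation.
-/

namespace Matrix

section Sqrt

variable {n 𝕜 : Type*} [Fintype n] [RCLike 𝕜] [DecidableEq n]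

lemma PosSemidef.posSemidef_sqrt {A : Matrix n n 𝕜} (hA : A.PosSemidef) :
    hA.sqrt.PosSemidef := by
  have hdiag : (diagonal ((↑) ∘ (√·) ∘ hA.1.eigenvalues : n → 𝕜)).PosSemidef :=
    posSemidef_diagonal_iff.mpr fun i => by simp [RCLike.ofReal_nonneg, Real.sqrt_nonneg]
  simpa [PosSemidef.sqrt, star_eq_conjTranspose] using
    hdiag.mul_mul_conjTranspose_same (hA.1.eigenvectorUnitary : Matrix n n 𝕜)

lemma PosSemidef.sqrt_mul_self {A : Matrix n n 𝕜} (hA : A.PosSemidef) :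
    hA.sqrt * hA.sqrt = A := by
  set U : Matrix n n 𝕜 := (hA.1.eigenvectorUnitary : Matrix n n 𝕜)
  set D := diagonal ((↑) ∘ (√·) ∘ hA.1.eigenvalues : n → 𝕜)
  have hUU : star U * U = 1 := by simp [U]
  have hDD : D * D = diagonal ((↑) ∘ hA.1.eigenvalues) := by
    rw [diagonal_mul_diagonal]
    congr! with i
    simp [← RCLike.ofReal_mul, Real.mul_self_sqrt (hA.eigenvalues_nonneg i)]
  calc hA.sqrt * hA.sqrt = U * (D * (star U * U) * D) * star U := by
        simp only [PosSemidef.sqrt, U, D, Matrix.mul_assoc]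
    _ = A := by
        rw [hUU, Matrix.mul_one, hDD]
        simpa [Unitary.conjStarAlgAut_apply] using hA.1.spectral_theorem.symm

lemma PosDef.isUnit_sqrt {A : Matrix n n 𝕜} (hA : A.PosDef) : IsUnit hA.posSemidef.sqrt :=
  isUnit_of_mul_isUnit_left (hA.posSemidef.sqrt_mul_self ▸ hA.isUnit)

end Sqrt

section Selector

variable {l m n p R : Type*} [Semiring R] [StarRing R]

lemma submatrix_add_mul_conjTranspose [Fintype l] (S : Matrix n n R) (U : Matrix n l R)
    (f : m → n) :
    (S + U * Uᴴ).submatrix f f = S.submatrix f f + U.submatrix f id * (U.submatrix f id)ᴴ := by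
  rw [submatrix_add, Pi.add_apply, Pi.add_apply, submatrix_mul _ _ _ id _ Function.bijective_id,
    conjTranspose_submatrix]

variable [Fintype n] [DecidableEq n]

lemma conjTranspose_submatrix_one_mul (f : m → n) (M : Matrix n l R) :
    ((1 : Matrix n n R).submatrix id f)ᴴ * M = M.submatrix f id := by
  simpa [conjTranspose_submatrix] using one_submatrix_mul f (Equiv.refl n) M

lemma conjTranspose_submatrix_one_mul_mul {f : m → n} (M : Matrix n n R) :
    ((1 : Matrix n n R).submatrix id f)ᴴ * M * (1 : Matrix n n R).submatrix id f =
      M.submatrix f f := by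
  rw [conjTranspose_submatrix_one_mul]
  simpa using mul_submatrix_one (Equiv.refl n) f (M.submatrix f id)

lemma conjTranspose_submatrix_one_mul_self [DecidableEq m] {f : m → n}
    (hf : Function.Injective f) :
    ((1 : Matrix n n R).submatrix id f)ᴴ * (1 : Matrix n n R).submatrix id f = 1 := by
  rw [conjTranspose_submatrix_one_mul, submatrix_submatrix]
  exact submatrix_one f hf

lemma conjTranspose_submatrix_one_mul_submatrix_one {f : m → n} {g : p → n}
    (hfg : ∀ i j, f i ≠ g j) :
    ((1 : Matrix n n R).submatrix id f)ᴴ * (1 : Matrix n n R).submatrix id g = 0 := by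
  rw [conjTranspose_submatrix_one_mul]
  ext i j
  simp [hfg]

lemma submatrix_one_mul_conjTranspose_add [Fintype m] [Fintype p] (e : m ⊕ p ≃ n) :
    (1 : Matrix n n R).submatrix id (e ∘ Sum.inl) *
          ((1 : Matrix n n R).submatrix id (e ∘ Sum.inl))ᴴ +
        (1 : Matrix n n R).submatrix id (e ∘ Sum.inr) *
          ((1 : Matrix n n R).submatrix id (e ∘ Sum.inr))ᴴ = 1 := by
  ext i j
  simp only [add_apply, mul_apply, submatrix_apply, conjTranspose_apply]
  calc _ = ∑ k : m ⊕ p, (1 : Matrix n n R) i (e k) * star ((1 : Matrix n n R) j (e k)) :=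
        (Fintype.sum_sum_type _).symm
    _ = ∑ k, (1 : Matrix n n R) i k * star ((1 : Matrix n n R) j k) :=
        e.sum_comp fun k => (1 : Matrix n n R) i k * star ((1 : Matrix n n R) j k)
    _ = (1 : Matrix n n R) i j := by simp [one_apply, apply_ite star]

end Selector

lemma of_ite_val_eq_eq_submatrix_one {R : Type*} [Zero R] [One R] {k m : ℕ} (h : m ≤ k) :
    (of fun (i : Fin k) (j : Fin m) => if (i : ℕ) = j then (1 : R) else 0) =
      (1 : Matrix (Fin k) (Fin k) R).submatrix id (Fin.castLE h) := by
  ext i j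
  simp [one_apply, Fin.ext_iff]

lemma of_ite_val_eq_conjTranspose_mul_self {R : Type*} [Semiring R] [StarRing R] {k m : ℕ}
    (h : m ≤ k) :
    (of fun (i : Fin k) (j : Fin m) => if (i : ℕ) = j then (1 : R) else 0)ᴴ *
      (of fun (i : Fin k) (j : Fin m) => if (i : ℕ) = j then (1 : R) else 0) = 1 := by
  rw [of_ite_val_eq_eq_submatrix_one h]
  exact conjTranspose_submatrix_one_mul_self (Fin.castLE_injective h)

section Compression

variable {m n p R : Type*} [Fintype m] [Fintype n] [Fintype p]
  [DecidableEq m] [DecidableEq n] [DecidableEq p] [CommRing R]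

lemma inv_sub_eq_mul_inv_compression_mul [StarRing R] {S : Matrix n n R} {E₁ : Matrix n m R}
    {E₂ : Matrix n p R} (hS : IsUnit S) (hD : IsUnit (E₁ᴴ * S⁻¹ * E₁))
    (hT : IsUnit (E₂ᴴ * S * E₂)) (h₁₂ : E₁ᴴ * E₂ = 0) (hsum : E₁ * E₁ᴴ + E₂ * E₂ᴴ = 1) :
    S⁻¹ - S⁻¹ * E₁ * (E₁ᴴ * S⁻¹ * E₁)⁻¹ * E₁ᴴ * S⁻¹ = E₂ * (E₂ᴴ * S * E₂)⁻¹ * E₂ᴴ := by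
  set D := E₁ᴴ * S⁻¹ * E₁
  set Q := S⁻¹ - S⁻¹ * E₁ * D⁻¹ * E₁ᴴ * S⁻¹
  have hQE₁ : Q * E₁ = 0 := by
    have : Q * E₁ = S⁻¹ * E₁ - S⁻¹ * E₁ * (D⁻¹ * D) := by
      simp only [Q, D, Matrix.sub_mul, Matrix.mul_assoc]
    rw [this, D.nonsing_inv_mul ((isUnit_iff_isUnit_det _).mp hD), Matrix.mul_one, sub_self]
  have hQS : Q * S * E₂ = E₂ := by
    have : Q * S * E₂ = S⁻¹ * S * E₂ - S⁻¹ * E₁ * D⁻¹ * (E₁ᴴ * (S⁻¹ * S * E₂)) := by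
      simp only [Q, Matrix.sub_mul, Matrix.mul_assoc]
    rw [this, S.nonsing_inv_mul ((isUnit_iff_isUnit_det _).mp hS), Matrix.one_mul, h₁₂,
      Matrix.mul_zero, sub_zero]
  have hQ : Q = Q * E₂ * E₂ᴴ := by
    calc Q = Q * (E₁ * E₁ᴴ + E₂ * E₂ᴴ) := by rw [hsum, Matrix.mul_one]
      _ = Q * E₁ * E₁ᴴ + Q * E₂ * E₂ᴴ := by simp only [Matrix.mul_add, Matrix.mul_assoc]
      _ = Q * E₂ * E₂ᴴ := by rw [hQE₁, Matrix.zero_mul, zero_add]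
  have hQE₂ : Q * E₂ = E₂ * (E₂ᴴ * S * E₂)⁻¹ := by
    calc Q * E₂ = Q * E₂ * ((E₂ᴴ * S * E₂) * (E₂ᴴ * S * E₂)⁻¹) := by
          rw [(E₂ᴴ * S * E₂).mul_nonsing_inv ((isUnit_iff_isUnit_det _).mp hT), Matrix.mul_one]
      _ = (Q * E₂ * E₂ᴴ) * S * E₂ * (E₂ᴴ * S * E₂)⁻¹ := by simp only [Matrix.mul_assoc]
      _ = E₂ * (E₂ᴴ * S * E₂)⁻¹ := by rw [← hQ, hQS]
  rw [hQ, hQE₂]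

lemma mul_inv_add_mul_mul_eq_sub {S : Matrix p p R} (B : Matrix m p R) (Y : Matrix p m R)
    (hS : IsUnit S) (hX : IsUnit (1 + B * S⁻¹ * Y)) :
    B * (S + Y * B)⁻¹ * Y =
      B * S⁻¹ * Y - B * S⁻¹ * Y * (1 + B * S⁻¹ * Y)⁻¹ * (B * S⁻¹ * Y) := by
  have hW := add_mul_mul_inv_eq_sub S Y 1 B hS isUnit_one (by rwa [inv_one])
  rw [Matrix.mul_one, inv_one] at hW
  rw [hW]
  simp only [Matrix.mul_sub, Matrix.sub_mul, Matrix.mul_assoc]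

end Compression

lemma inv_smul_of_ne_zero {n K : Type*} [Fintype n] [DecidableEq n] [Field K] {k : K}
    (hk : k ≠ 0) {A : Matrix n n K} (hA : IsUnit A) : (k • A)⁻¹ = k⁻¹ • A⁻¹ := by
  have := invertibleOfNonzero hk
  rw [Matrix.inv_smul _ _ ((isUnit_iff_isUnit_det A).mp hA), invOf_eq_inv]

lemma PosDef.conjTranspose_mul_inv_add_mul_conjTranspose_mul {p μ : Type*} [Fintype p]
    [Fintype μ] [DecidableEq p] [DecidableEq μ] {S : Matrix p p ℂ} (hS : S.PosDef)
    (Y : Matrix p μ ℂ) :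
    Yᴴ * (S + Y * Yᴴ)⁻¹ * Y =
      Yᴴ * S⁻¹ * Y - Yᴴ * S⁻¹ * Y * (1 + Yᴴ * S⁻¹ * Y)⁻¹ * (Yᴴ * S⁻¹ * Y) :=
  mul_inv_add_mul_mul_eq_sub _ _ hS.isUnit
    (PosDef.one.add_posSemidef (hS.inv.posSemidef.conjTranspose_mul_mul_same Y)).isUnit

end Matrix

section Projection

variable {n m p μ : Type*} [Fintype n] [Fintype m] [DecidableEq n] [DecidableEq m]

lemma isHermitian_projPerp (F : Matrix n m ℂ) : (projPerp F).IsHermitian := by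
  have hG : ((Fᴴ * F)⁻¹)ᴴ = (Fᴴ * F)⁻¹ := by
    rw [conjTranspose_nonsing_inv, (isHermitian_conjTranspose_mul_self F).eq]
  simp only [IsHermitian, projPerp, proj, conjTranspose_sub, conjTranspose_one,
    conjTranspose_mul, conjTranspose_conjTranspose, hG, Matrix.mul_assoc]

variable {W : Matrix n n ℂ}

lemma proj_inv_mul (hW : W.IsHermitian) (E : Matrix n m ℂ) :
    proj (W⁻¹ * E) = W⁻¹ * (E * (Eᴴ * (W * W)⁻¹ * E)⁻¹ * Eᴴ) * W⁻¹ := by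
  simp only [proj, conjTranspose_mul, hW.inv.eq, Matrix.mul_inv_rev, Matrix.mul_assoc]

lemma conjTranspose_mul_projPerp_inv_mul (hW : W.IsHermitian) (E : Matrix n m ℂ)
    (Y : Matrix n μ ℂ) :
    (W⁻¹ * Y)ᴴ * projPerp (W⁻¹ * E) * (W⁻¹ * Y) =
      Yᴴ * ((W * W)⁻¹ - (W * W)⁻¹ * E * (Eᴴ * (W * W)⁻¹ * E)⁻¹ * Eᴴ * (W * W)⁻¹) * Y := by
  simp only [projPerp, proj_inv_mul hW, conjTranspose_mul, hW.inv.eq, Matrix.mul_inv_rev,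
    Matrix.mul_sub, Matrix.sub_mul, Matrix.mul_one, Matrix.mul_assoc]

lemma conjTranspose_mul_mul_projPerp_inv_mul_mul_inv [Fintype p] (hW : W.IsHermitian)
    (hWu : IsUnit W) {E : Matrix n m ℂ} {E' : Matrix n p ℂ} (h : E'ᴴ * E = 0) :
    E'ᴴ * (W * projPerp (W⁻¹ * E) * W⁻¹) = E'ᴴ := by
  have : E'ᴴ * (W * projPerp (W⁻¹ * E) * W⁻¹) =
      E'ᴴ * (W * W⁻¹) - E'ᴴ * (W * W⁻¹) * E * ((Eᴴ * (W * W)⁻¹ * E)⁻¹ * Eᴴ * W⁻¹ * W⁻¹) := by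
    simp only [projPerp, proj_inv_mul hW, Matrix.mul_sub, Matrix.sub_mul, Matrix.mul_one,
      Matrix.mul_assoc]
  rw [this, W.mul_nonsing_inv ((isUnit_iff_isUnit_det _).mp hWu), Matrix.mul_one, h,
    Matrix.zero_mul, sub_zero]

variable [Fintype p]

lemma submatrix_mul_projPerp_inv_mul_mul_inv (hW : W.IsHermitian) (hWu : IsUnit W)
    (e : m ⊕ p ≃ n) (Y : Matrix n μ ℂ) :
    (W * projPerp (W⁻¹ * (1 : Matrix n n ℂ).submatrix id (e ∘ Sum.inl)) * W⁻¹ * Y).submatrix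
        (e ∘ Sum.inr) id = Y.submatrix (e ∘ Sum.inr) id := by
  rw [← conjTranspose_submatrix_one_mul, ← Matrix.mul_assoc,
    conjTranspose_mul_mul_projPerp_inv_mul_mul_inv hW hWu
      (conjTranspose_submatrix_one_mul_submatrix_one fun i j => by simp),
    conjTranspose_submatrix_one_mul]

lemma whitened_form_eq_inv_submatrix [DecidableEq p] {R : Matrix n n ℂ} (hR : R.PosDef)
    (e : m ⊕ p ≃ n) (Y : Matrix n μ ℂ) :
    ((hR.posSemidef.sqrt)⁻¹ * Y)ᴴ *
        projPerp ((hR.posSemidef.sqrt)⁻¹ * (1 : Matrix n n ℂ).submatrix id (e ∘ Sum.inl)) *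
        ((hR.posSemidef.sqrt)⁻¹ * Y) =
      (Y.submatrix (e ∘ Sum.inr) id)ᴴ * (R.submatrix (e ∘ Sum.inr) (e ∘ Sum.inr))⁻¹ *
        Y.submatrix (e ∘ Sum.inr) id := by
  set E₁ := (1 : Matrix n n ℂ).submatrix id (e ∘ Sum.inl)
  set E₂ := (1 : Matrix n n ℂ).submatrix id (e ∘ Sum.inr)
  have h₁₂ : E₁ᴴ * E₂ = 0 := conjTranspose_submatrix_one_mul_submatrix_one fun i j => by simp
  have hD : IsUnit (E₁ᴴ * R⁻¹ * E₁) := by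
    rw [conjTranspose_submatrix_one_mul_mul]
    exact (hR.inv.submatrix (e.injective.comp Sum.inl_injective)).isUnit
  have hT : E₂ᴴ * R * E₂ = R.submatrix (e ∘ Sum.inr) (e ∘ Sum.inr) :=
    conjTranspose_submatrix_one_mul_mul R
  rw [conjTranspose_mul_projPerp_inv_mul hR.posSemidef.posSemidef_sqrt.isHermitian,
    hR.posSemidef.sqrt_mul_self,
    inv_sub_eq_mul_inv_compression_mul hR.isUnit hD
      (hT ▸ (hR.submatrix (e.injective.comp Sum.inr_injective)).isUnit) h₁₂
      (submatrix_one_mul_conjTranspose_add e), hT, ← conjTranspose_submatrix_one_mul]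
  simp only [conjTranspose_mul, conjTranspose_conjTranspose, Matrix.mul_assoc]
  rfl

end Projection

theorem rao_statistic_mis_identity_general
    (t r q K M : ℕ) (hK : 0 < K)
    (hMK : M ≤ K)
    (Sc : Matrix ((Fin t ⊕ Fin r) ⊕ Fin q) ((Fin t ⊕ Fin r) ⊕ Fin q) ℂ) (hS : Sc.PosDef)
    (Z : Matrix ((Fin t ⊕ Fin r) ⊕ Fin q) (Fin K) ℂ) :
    -- `E_t` : first `t` columns of `I_N`
    let Et : Matrix ((Fin t ⊕ Fin r) ⊕ Fin q) (Fin t) ℂ := fromRows (fromRows 1 0) 0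
    let C : Matrix (Fin M) (Fin K) ℂ := Matrix.of fun i j => if (i : ℕ) = (j : ℕ) then 1 else 0
    -- `V_{c,1} = [I_M; 0]`
    let Vc1 : Matrix (Fin K) (Fin M) ℂ := Matrix.of fun i j => if (i : ℕ) = (j : ℕ) then 1 else 0
    let PC : Matrix (Fin K) (Fin K) ℂ := Cᴴ * (C * Cᴴ)⁻¹ * C
    let Shalf : Matrix ((Fin t ⊕ Fin r) ⊕ Fin q) ((Fin t ⊕ Fin r) ⊕ Fin q) ℂ :=
      hS.posSemidef.sqrt
    let A0 : Matrix ((Fin t ⊕ Fin r) ⊕ Fin q) (Fin t) ℂ := Shalf⁻¹ * Et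
    let ZW1 : Matrix ((Fin t ⊕ Fin r) ⊕ Fin q) (Fin K) ℂ := Shalf⁻¹ * Z
    let R0 : Matrix ((Fin t ⊕ Fin r) ⊕ Fin q) ((Fin t ⊕ Fin r) ⊕ Fin q) ℂ :=
      ((K : ℂ))⁻¹ • (Sc + Shalf * projPerp A0 * ZW1 * PC * ZW1ᴴ * projPerp A0 * Shalf)
    -- embedding of the lower `(r + q)` block of indices
    let g : Fin r ⊕ Fin q → (Fin t ⊕ Fin r) ⊕ Fin q := Sum.elim (Sum.inl ∘ Sum.inr) Sum.inr
    -- row blocks `Z₂₃ = [Z₂; Z₃]` of `Z_c = Z V_{c,1}`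
    let Z23 : Matrix (Fin r ⊕ Fin q) (Fin M) ℂ := (Z * Vc1).submatrix g id
    -- lower-right `(r+q) × (r+q)` block `S₂` of `S_c`
    let S2 : Matrix (Fin r ⊕ Fin q) (Fin r ⊕ Fin q) ℂ := Sc.submatrix g g
    let X : Matrix (Fin M) (Fin M) ℂ := Z23ᴴ * S2⁻¹ * Z23
    ∃ h0 : R0.PosDef,
      ((h0.posSemidef.sqrt)⁻¹ * Z * Vc1)ᴴ * projPerp ((h0.posSemidef.sqrt)⁻¹ * Et) *
          ((h0.posSemidef.sqrt)⁻¹ * Z * Vc1) =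
        (K : ℂ) • (X - X * (1 + X)⁻¹ * X) := by
  intro Et C Vc1 PC Shalf A0 ZW1 R0 g Z23 S2 X
  set e := (Equiv.sumAssoc (Fin t) (Fin r) (Fin q)).symm
  have hEt : Et = (1 : Matrix _ _ ℂ).submatrix id (e ∘ Sum.inl) := by
    ext ((i | i) | i) j <;> simp [Et, e, one_apply]
  have hg : g = e ∘ Sum.inr := by
    funext i
    rcases i with i | i <;> rfl
  have hC : C = Vc1ᴴ := by
    ext i j
    simp [C, Vc1, eq_comm, apply_ite star]
  have hVV : Vc1ᴴ * Vc1 = 1 := of_ite_val_eq_conjTranspose_mul_self hMK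
  have hPC : PC = Vc1 * Vc1ᴴ := by
    simp only [PC, hC, conjTranspose_conjTranspose, hVV, inv_one, Matrix.mul_one]
  have hW : Shalf.IsHermitian := hS.posSemidef.posSemidef_sqrt.isHermitian
  set U := Shalf * projPerp A0 * Shalf⁻¹ * (Z * Vc1)
  have hR0 : R0 = (K : ℂ)⁻¹ • (Sc + U * Uᴴ) := by
    simp only [R0, ZW1, hPC, U, conjTranspose_mul, (isHermitian_projPerp A0).eq, hW.eq,
      hW.inv.eq, Matrix.mul_assoc]
  have hU : U.submatrix g id = Z23 := by
    simpa only [U, A0, Z23, hEt, hg] using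
      submatrix_mul_projPerp_inv_mul_mul_inv hW hS.isUnit_sqrt e (Z * Vc1)
  have hR0g : R0.submatrix g g = (K : ℂ)⁻¹ • (S2 + Z23 * Z23ᴴ) := by
    rw [hR0, submatrix_smul, Pi.smul_apply, Pi.smul_apply, submatrix_add_mul_conjTranspose, hU]
  have h0 : R0.PosDef := hR0 ▸ (hS.add_posSemidef (posSemidef_self_mul_conjTranspose U)).smul
    (inv_pos.2 (by exact_mod_cast hK))
  refine ⟨h0, ?_⟩
  have hS2 : S2.PosDef := hS.submatrix (hg ▸ e.injective.comp Sum.inr_injective)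
  have hT : (S2 + Z23 * Z23ᴴ).PosDef :=
    hS2.add_posSemidef (posSemidef_self_mul_conjTranspose Z23)
  rw [Matrix.mul_assoc _ Z, hEt, whitened_form_eq_inv_submatrix h0 e, ← hg, hR0g,
    inv_smul_of_ne_zero (inv_ne_zero (Nat.cast_ne_zero.mpr hK.ne')) hT.isUnit, inv_inv,
    Matrix.mul_smul, Matrix.smul_mul, hS2.conjTranspose_mul_inv_add_mul_conjTranspose_mul]

/-- Eq. (MIS_E3) of the paper (CFARness of the Rao/Durbin test):
`(Z_{W0} V_{c,1})ᴴ P_{Ā₀}^⊥ (Z_{W0} V_{c,1}) = K (X − X (I + X)⁻¹ X)` with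
`X = Z₂₃ᴴ S₂⁻¹ Z₂₃`. -/
theorem rao_statistic_mis_identity
    (t r q K M : ℕ) (ht : 0 < t) (hr : 0 < r) (hq : 0 < q) (hK : 0 < K) (hM : 0 < M)
    (hMK : M ≤ K)
    (Sc : Matrix ((Fin t ⊕ Fin r) ⊕ Fin q) ((Fin t ⊕ Fin r) ⊕ Fin q) ℂ) (hS : Sc.PosDef)
    (Z : Matrix ((Fin t ⊕ Fin r) ⊕ Fin q) (Fin K) ℂ) :
    -- `E_t` : first `t` columns of `I_N`
    let Et : Matrix ((Fin t ⊕ Fin r) ⊕ Fin q) (Fin t) ℂ := fromRows (fromRows 1 0) 0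
    let C : Matrix (Fin M) (Fin K) ℂ := Matrix.of fun i j => if (i : ℕ) = (j : ℕ) then 1 else 0
    -- `V_{c,1} = [I_M; 0]`
    let Vc1 : Matrix (Fin K) (Fin M) ℂ := Matrix.of fun i j => if (i : ℕ) = (j : ℕ) then 1 else 0
    let PC : Matrix (Fin K) (Fin K) ℂ := Cᴴ * (C * Cᴴ)⁻¹ * C
    let Shalf : Matrix ((Fin t ⊕ Fin r) ⊕ Fin q) ((Fin t ⊕ Fin r) ⊕ Fin q) ℂ :=
      hS.posSemidef.sqrt
    let A0 : Matrix ((Fin t ⊕ Fin r) ⊕ Fin q) (Fin t) ℂ := Shalf⁻¹ * Et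
    let ZW1 : Matrix ((Fin t ⊕ Fin r) ⊕ Fin q) (Fin K) ℂ := Shalf⁻¹ * Z
    let R0 : Matrix ((Fin t ⊕ Fin r) ⊕ Fin q) ((Fin t ⊕ Fin r) ⊕ Fin q) ℂ :=
      ((K : ℂ))⁻¹ • (Sc + Shalf * projPerp A0 * ZW1 * PC * ZW1ᴴ * projPerp A0 * Shalf)
    -- embedding of the lower `(r + q)` block of indices
    let g : Fin r ⊕ Fin q → (Fin t ⊕ Fin r) ⊕ Fin q := Sum.elim (Sum.inl ∘ Sum.inr) Sum.inr
    -- row blocks `Z₂₃ = [Z₂; Z₃]` of `Z_c = Z V_{c,1}`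
    let Z23 : Matrix (Fin r ⊕ Fin q) (Fin M) ℂ := (Z * Vc1).submatrix g id
    -- lower-right `(r+q) × (r+q)` block `S₂` of `S_c`
    let S2 : Matrix (Fin r ⊕ Fin q) (Fin r ⊕ Fin q) ℂ := Sc.submatrix g g
    let X : Matrix (Fin M) (Fin M) ℂ := Z23ᴴ * S2⁻¹ * Z23
    ∃ h0 : R0.PosDef,
      ((h0.posSemidef.sqrt)⁻¹ * Z * Vc1)ᴴ * projPerp ((h0.posSemidef.sqrt)⁻¹ * Et) *
          ((h0.posSemidef.sqrt)⁻¹ * Z * Vc1) =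
        (K : ℂ) • (X - X * (1 + X)⁻¹ * X) :=
  rao_statistic_mis_identity_general t r q K M hK hMK Sc hS Z
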